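/- arXiv:1612.08982 — 7 statements merged into one kernel-verified Lean document; each statement's English description precedes it below -/
import Mathlib

section
/- For every s ∈ (0,1), the element u^{(1)}(s) with coordinates (u^{(1)}(s))_k = −(log λ_k) λ_k^{-s} f_k belongs to H, and the map S : (0,1) → H has (Fréchet) derivative u^{(1)}(s) at s; that is, ‖S(s+h) − S(s) − h·u^{(1)}(s)‖ / |h| → 0 as h → 0. -/
/-!
In the eigenbasis the state is `k ↦ exp (-s L_k) f_k` with `L_k = log λ_k ≥ log λ₁`. The
second-order Taylor remainder of `s ↦ exp (-s L)` is at most `h²` times the supremum of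
`L² exp (-t L)` over `t` between `s` and `s + h`, and for `t` bounded away from `0` this is
bounded uniformly in `L ≥ log λ₁` (for `L ≥ 0` by `(tL)² / 2 ≤ exp (tL)`). Hence the
remainder of `S` is `O(h²) ‖f‖` in `ℓ²`, and the same bound with `|L|` in place of `L²` puts
`u⁽¹⁾(s)` in `ℓ²`.
-/

open Real Set Filter Topology Asymptotics
open scoped Nat ENNReal

theorem norm_sub_sub_smul_le_of_hasDerivAt {E : Type*} [NormedAddCommGroup E] [NormedSpace ℝ E]
    {g g' g'' : ℝ → E} {s x M : ℝ}
    (hg : ∀ t ∈ uIcc s x, HasDerivAt g (g' t) t) (hg' : ∀ t ∈ uIcc s x, HasDerivAt g' (g'' t) t)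
    (hM : ∀ t ∈ uIcc s x, ‖g'' t‖ ≤ M) :
    ‖g x - g s - (x - s) • g' s‖ ≤ M * (x - s) ^ 2 := by
  have hg'_lip : ∀ t ∈ uIcc s x, ‖g' t - g' s‖ ≤ M * ‖x - s‖ := fun t ht =>
    calc ‖g' t - g' s‖ ≤ M * ‖t - s‖ :=
          (convex_uIcc s x).norm_image_sub_le_of_norm_hasDerivWithin_le
            (fun u hu => (hg' u hu).hasDerivWithinAt) hM left_mem_uIcc ht
      _ ≤ M * ‖x - s‖ := by
          gcongr
          · exact (norm_nonneg _).trans (hM s left_mem_uIcc)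
          · simpa only [Real.norm_eq_abs] using abs_sub_left_of_mem_uIcc ht
  have hrem : ∀ t ∈ uIcc s x,
      HasDerivAt (fun u => g u - (u - s) • g' s) (g' t - g' s) t := fun t ht =>
    ((hg t ht).sub (((hasDerivAt_id t).sub_const s).smul_const (g' s))).congr_deriv
      (by rw [one_smul])
  calc ‖g x - g s - (x - s) • g' s‖
      = ‖(g x - (x - s) • g' s) - (g s - (s - s) • g' s)‖ := by
        rw [sub_self, zero_smul, sub_zero, sub_right_comm]
    _ ≤ M * ‖x - s‖ * ‖x - s‖ :=
        (convex_uIcc s x).norm_image_sub_le_of_norm_hasDerivWithin_le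
          (fun u hu => (hrem u hu).hasDerivWithinAt) hg'_lip left_mem_uIcc right_mem_uIcc
    _ = M * (x - s) ^ 2 := by rw [Real.norm_eq_abs, mul_assoc, ← sq, sq_abs]

theorem exists_forall_abs_pow_mul_exp_neg_mul_le (n : ℕ) (ℓ : ℝ) {a : ℝ} (ha : 0 < a) (b : ℝ) :
    ∃ M, ∀ L, ℓ ≤ L → ∀ t ∈ Icc a b, |L| ^ n * exp (-(t * L)) ≤ M := by
  refine ⟨n ! / a ^ n + |ℓ| ^ n * exp (b * |ℓ|), fun L hL t ⟨hat, htb⟩ => ?_⟩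
  rcases le_or_gt 0 L with hL0 | hL0
  · have hpow : (a * L) ^ n / n ! ≤ exp (a * L) :=
      Real.pow_div_factorial_le_exp _ (by positivity) n
    calc |L| ^ n * exp (-(t * L)) ≤ L ^ n * exp (-(a * L)) := by
          rw [abs_of_nonneg hL0]; gcongr
      _ = (a * L) ^ n / exp (a * L) / a ^ n := by
          rw [exp_neg, mul_pow]; field_simp
      _ ≤ n ! / a ^ n := by
          gcongr
          rw [div_le_iff₀ (exp_pos _)]
          rwa [div_le_iff₀ (by positivity), mul_comm (rexp _)] at hpow
      _ ≤ n ! / a ^ n + |ℓ| ^ n * exp (b * |ℓ|) := le_add_of_nonneg_right (by positivity)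
  · have hLℓ : |L| ≤ |ℓ| := abs_le_abs_of_nonpos hL0.le hL
    calc |L| ^ n * exp (-(t * L)) ≤ |ℓ| ^ n * exp (b * |ℓ|) := by
          gcongr
          rw [← mul_neg, ← abs_of_neg hL0]
          exact mul_le_mul htb hLℓ (abs_nonneg _) (ha.le.trans (hat.trans htb))
      _ ≤ n ! / a ^ n + |ℓ| ^ n * exp (b * |ℓ|) := le_add_of_nonneg_left (by positivity)

theorem hasDerivAt_of_norm_sub_sub_smul_le {E : Type*} [NormedAddCommGroup E] [NormedSpace ℝ E]
    {F : ℝ → E} {F' : E} {s C : ℝ}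
    (h : ∀ᶠ x in 𝓝 s, ‖F x - F s - (x - s) • F'‖ ≤ C * (x - s) ^ 2) : HasDerivAt F F' s := by
  rw [hasDerivAt_iff_isLittleO]
  refine IsBigO.trans_isLittleO (IsBigO.of_bound C ?_) (isLittleO_pow_sub_sub s one_lt_two)
  filter_upwards [h] with x hx
  simpa [Real.norm_eq_abs, sq_abs] using hx

theorem lp.hasDerivAt_of_norm_apply_sub_sub_smul_le {ι : Type*} {E : ι → Type*}
    [∀ i, NormedAddCommGroup (E i)] [∀ i, NormedSpace ℝ (E i)] {p : ℝ≥0∞} [Fact (1 ≤ p)]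
    {F : ℝ → lp E p} {F' g : lp E p} {s C : ℝ}
    (h : ∀ᶠ x in 𝓝 s, ∀ i, ‖F x i - F s i - (x - s) • F' i‖ ≤ C * (x - s) ^ 2 * ‖g i‖) :
    HasDerivAt F F' s := by
  refine hasDerivAt_of_norm_sub_sub_smul_le (C := |C| * ‖g‖) ?_
  filter_upwards [h] with x hx
  calc ‖F x - F s - (x - s) • F'‖ ≤ ‖(C * (x - s) ^ 2) • g‖ := by
        refine lp.norm_mono (zero_lt_one.trans_le Fact.out).ne' fun i => ?_
        simp only [lp.coeFn_sub, lp.coeFn_smul, Pi.sub_apply, Pi.smul_apply, norm_smul]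
        exact (hx i).trans (by gcongr; exact le_norm_self _)
    _ = |C| * ‖g‖ * (x - s) ^ 2 := by
        rw [norm_smul, Real.norm_eq_abs, abs_mul, abs_pow, sq_abs]; ring

theorem hasDerivAt_exp_neg_mul (L t : ℝ) :
    HasDerivAt (fun u => exp (-(u * L))) (-L * exp (-(t * L))) t :=
  (((hasDerivAt_id t).mul_const L).neg.exp).congr_deriv (by simp [mul_comm])

theorem abs_exp_neg_mul_sub_sub_le {L s x M : ℝ}
    (hM : ∀ t ∈ uIcc s x, |L| ^ 2 * exp (-(t * L)) ≤ M) :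
    |exp (-(x * L)) - exp (-(s * L)) - (x - s) * (-L * exp (-(s * L)))| ≤ M * (x - s) ^ 2 :=
  norm_sub_sub_smul_le_of_hasDerivAt (fun t _ => hasDerivAt_exp_neg_mul L t)
    (fun t _ => (hasDerivAt_exp_neg_mul L t).const_mul (-L)) fun t ht => by
      rw [Real.norm_eq_abs, ← mul_assoc, neg_mul_neg, ← sq, abs_mul, abs_pow,
        abs_of_pos (exp_pos _)]
      exact hM t ht

/-- For every `s ∈ (0,1)` the sequence `k ↦ -(log λ_k) λ_k^{-s} f_k` belongs to `ℓ²`,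
and the control-to-state map `S` is (Fréchet) differentiable at `s` with derivative
any element `u1` of `ℓ²` having these coordinates. -/
theorem hasDerivAt_state (lam1 : ℝ) (hlam1 : 0 < lam1) (lam : ℕ → ℝ)
    (hlam : ∀ k, lam1 ≤ lam k) (f : lp (fun _ : ℕ => ℝ) 2)
    (S : ℝ → lp (fun _ : ℕ => ℝ) 2)
    (hS : ∀ s ∈ Set.Ioo (0 : ℝ) 1, ∀ k, S s k = lam k ^ (-s) * f k) :
    ∀ s ∈ Set.Ioo (0 : ℝ) 1,
      Memℓp (fun k => -(Real.log (lam k)) * lam k ^ (-s) * f k) 2 ∧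
      ∀ u1 : lp (fun _ : ℕ => ℝ) 2,
        (∀ k, u1 k = -(Real.log (lam k)) * lam k ^ (-s) * f k) →
        HasDerivAt S u1 s := by
  rintro s hs
  have hlog : ∀ k, log lam1 ≤ log (lam k) := fun k => log_le_log hlam1 (hlam k)
  have hrpow : ∀ k t, lam k ^ (-t) = exp (-(t * log (lam k))) := fun k t => by
    rw [rpow_def_of_pos (hlam1.trans_le (hlam k)), mul_neg, mul_comm]
  obtain ⟨M₁, hM₁⟩ := exists_forall_abs_pow_mul_exp_neg_mul_le 1 (log lam1) hs.1 1
  obtain ⟨M₂, hM₂⟩ := exists_forall_abs_pow_mul_exp_neg_mul_le 2 (log lam1) (half_pos hs.1) 1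
  refine ⟨(lp.memℓp f).norm.const_mul M₁ |>.mono fun k => ?_, fun u1 hu1 => ?_⟩
  · rw [hrpow, norm_mul, norm_mul, norm_neg, Real.norm_eq_abs, Real.norm_eq_abs,
      abs_of_pos (exp_pos _)]
    gcongr
    simpa using hM₁ _ (hlog k) s ⟨le_rfl, hs.2.le⟩
  refine lp.hasDerivAt_of_norm_apply_sub_sub_smul_le (g := f) (C := M₂) ?_
  filter_upwards [Ioo_mem_nhds (half_lt_self hs.1) (by linarith [hs.2] : s < (1 + s) / 2)]
    with x hx k
  have hxI : x ∈ Ioo (0 : ℝ) 1 := ⟨by linarith [hs.1, hx.1], by linarith [hs.2, hx.2]⟩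
  have hsx : uIcc s x ⊆ Icc (s / 2) 1 :=
    uIcc_subset_Icc ⟨(half_lt_self hs.1).le, hs.2.le⟩ ⟨hx.1.le, hxI.2.le⟩
  calc ‖S x k - S s k - (x - s) • u1 k‖
      = |exp (-(x * log (lam k))) - exp (-(s * log (lam k)))
          - (x - s) * (-log (lam k) * exp (-(s * log (lam k))))| * ‖f k‖ := by
        rw [hS x hxI, hS s hs, hu1, hrpow, hrpow, smul_eq_mul, Real.norm_eq_abs,
          Real.norm_eq_abs, ← abs_mul]
        ring_nf
    _ ≤ M₂ * (x - s) ^ 2 * ‖f k‖ := by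
        gcongr
        exact abs_exp_neg_mul_sub_sub_le fun t ht => hM₂ _ (hlog k) t (hsx ht)
end

section
/- There exists a constant C > 0, depending only on λ₁, such that for every s ∈ (0,1) and every real h with |h| < s/2, one has the quantitative Taylor estimate ‖S(s+h) − S(s) − h·u^{(1)}(s)‖ ≤ C · h² · s^{-2} · ‖f‖. -/
/-!
Coordinatewise, with `L = log λ_k`, the remainder is `e^{-sL} (e^{-hL} - 1 + hL) f_k`, and
`|e^x - 1 - x| ≤ x² e^{|x|}` bounds its factor by `h² L² e^{-sL + |h||L|}`. When `L ≥ 0`, the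
condition `|h| ≤ s/2` leaves the decay `e^{-sL/2}`, which absorbs `L²` at the cost `8/s²`
(from `t²/2 ≤ e^t`); negative `L` only occur in `[log λ₁, 0)`, where everything is bounded in
terms of `|log λ₁|`. The coordinatewise bound `C h² s⁻² |f_k|` then passes to the `ℓ²` norm.
-/
open Real

theorem abs_exp_sub_one_sub_le_sq_mul_exp_abs (x : ℝ) : |exp x - 1 - x| ≤ x ^ 2 * exp |x| := by
  rw [abs_of_nonneg (by linarith [add_one_le_exp x])]
  rcases le_or_gt |x| 1 with hx | hx
  · have hsmall := abs_exp_sub_one_sub_id_le hx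
    nlinarith [le_abs_self (exp x - 1 - x), one_le_exp (abs_nonneg x), sq_nonneg x]
  · have hx2 : 1 ≤ x ^ 2 := by nlinarith [sq_abs x]
    rcases le_or_gt 0 x with hx0 | hx0
    · rw [abs_of_nonneg hx0] at hx ⊢
      nlinarith [exp_pos x]
    · rw [abs_of_neg hx0] at hx ⊢
      nlinarith [exp_lt_one_iff.mpr hx0, one_le_exp (neg_pos.mpr hx0).le]

theorem sq_le_div_sq_mul_exp {s L : ℝ} (hs : 0 < s) (hL : 0 ≤ L) :
    L ^ 2 ≤ 8 / s ^ 2 * exp (s * L / 2) := by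
  have h := pow_div_factorial_le_exp (x := s * L / 2) (by positivity) 2
  rw [div_mul_eq_mul_div, le_div_iff₀ (by positivity)]
  norm_num [Nat.factorial] at h
  nlinarith

theorem sq_mul_exp_le_div_sq {A L s h : ℝ} (hL : -A ≤ L) (hs : 0 < s) (hs1 : s ≤ 1)
    (hh : |h| ≤ s / 2) :
    L ^ 2 * exp (-(s * L) + |h| * |L|) ≤ (8 + A ^ 2 * exp (2 * A)) / s ^ 2 := by
  rcases le_or_gt 0 L with hL0 | hL0
  · have hexp : -(s * L) + |h| * |L| ≤ -(s * L / 2) := by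
      rw [abs_of_nonneg hL0]; nlinarith
    calc L ^ 2 * exp (-(s * L) + |h| * |L|)
        ≤ 8 / s ^ 2 * exp (s * L / 2) * exp (-(s * L / 2)) := by
          gcongr
          exact sq_le_div_sq_mul_exp hs hL0
      _ = 8 / s ^ 2 := by rw [mul_assoc, ← exp_add, add_neg_cancel, exp_zero, mul_one]
      _ ≤ (8 + A ^ 2 * exp (2 * A)) / s ^ 2 := by
          gcongr; exact le_add_of_nonneg_right (by positivity)
  · have hLA : |L| ≤ A := by rw [abs_of_neg hL0]; linarith
    have hexp : -(s * L) + |h| * |L| ≤ 2 * A := by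
      have hh0 := abs_nonneg h
      rw [abs_of_neg hL0] at hLA ⊢; nlinarith
    have hL2 : L ^ 2 ≤ A ^ 2 := by rw [← sq_abs]; gcongr
    calc L ^ 2 * exp (-(s * L) + |h| * |L|) ≤ A ^ 2 * exp (2 * A) := by gcongr
      _ ≤ 8 + A ^ 2 * exp (2 * A) := le_add_of_nonneg_left (by norm_num)
      _ ≤ (8 + A ^ 2 * exp (2 * A)) / s ^ 2 := by
          rw [le_div_iff₀ (by positivity)]
          exact mul_le_of_le_one_right (by positivity) (pow_le_one₀ hs.le hs1)

theorem rpow_neg_add_sub_rpow_neg_sub_mul {x : ℝ} (hx : 0 < x) (s h : ℝ) :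
    x ^ (-(s + h)) - x ^ (-s) - h * (-log x * x ^ (-s)) =
      exp (-(s * log x)) * (exp (-h * log x) - 1 - -h * log x) := by
  rw [rpow_def_of_pos hx, rpow_def_of_pos hx,
    show log x * -(s + h) = -(s * log x) + -h * log x by ring,
    show log x * -s = -(s * log x) by ring, exp_add]
  ring

theorem abs_rpow_neg_add_sub_rpow_neg_sub_mul_le {x₁ x s h : ℝ} (hx₁ : 0 < x₁) (hx : x₁ ≤ x)
    (hs : 0 < s) (hs1 : s ≤ 1) (hh : |h| ≤ s / 2) :
    |x ^ (-(s + h)) - x ^ (-s) - h * (-log x * x ^ (-s))| ≤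
      (8 + |log x₁| ^ 2 * exp (2 * |log x₁|)) * h ^ 2 / s ^ 2 := by
  set L := log x
  have hL : -|log x₁| ≤ L := (neg_abs_le _).trans (log_le_log hx₁ hx)
  rw [rpow_neg_add_sub_rpow_neg_sub_mul (hx₁.trans_le hx), abs_mul, abs_of_pos (exp_pos _)]
  calc exp (-(s * L)) * |exp (-h * L) - 1 - -h * L|
      ≤ exp (-(s * L)) * ((-h * L) ^ 2 * exp |-h * L|) := by
        gcongr; exact abs_exp_sub_one_sub_le_sq_mul_exp_abs _
    _ = h ^ 2 * (L ^ 2 * exp (-(s * L) + |h| * |L|)) := by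
        rw [abs_mul, abs_neg, exp_add]; ring
    _ ≤ h ^ 2 * ((8 + |log x₁| ^ 2 * exp (2 * |log x₁|)) / s ^ 2) := by
        gcongr; exact sq_mul_exp_le_div_sq hL hs hs1 hh
    _ = _ := by ring

theorem lp.norm_le_mul_norm_of_forall_norm_apply_le {α : Type*} {E : α → Type*}
    [∀ i, NormedAddCommGroup (E i)] [∀ i, NormedSpace ℝ (E i)] {p : ENNReal} [Fact (1 ≤ p)]
    {v f : lp E p} {M : ℝ} (hM : 0 ≤ M) (hv : ∀ i, ‖v i‖ ≤ M * ‖f i‖) : ‖v‖ ≤ M * ‖f‖ := by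
  have hp : p ≠ 0 := (zero_lt_one.trans_le Fact.out).ne'
  calc ‖v‖ ≤ ‖M • f‖ := lp.norm_mono hp fun i => by
        rw [lp.coeFn_smul, Pi.smul_apply, norm_smul, Real.norm_of_nonneg hM]; exact hv i
    _ = M * ‖f‖ := by rw [lp.norm_const_smul hp, Real.norm_of_nonneg hM]

/-- Quantitative Taylor estimate: there is `C > 0`, depending only on `λ₁`, such that for every
`s ∈ (0,1)` and every real `h` with `|h| < s/2`,
`‖S(s+h) − S(s) − h·u¹(s)‖ ≤ C h² s⁻² ‖f‖`. -/
theorem taylor_estimate_state (lam1 : ℝ) (hlam1 : 0 < lam1) :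
    ∃ C : ℝ, 0 < C ∧
      ∀ (lam : ℕ → ℝ), (∀ k, lam1 ≤ lam k) →
      ∀ (f : lp (fun _ : ℕ => ℝ) 2) (S : ℝ → lp (fun _ : ℕ => ℝ) 2)
        (u1 : ℝ → lp (fun _ : ℕ => ℝ) 2),
        (∀ s : ℝ, 0 < s → ∀ k, S s k = lam k ^ (-s) * f k) →
        (∀ s : ℝ, 0 < s → ∀ k, u1 s k = -(Real.log (lam k)) * lam k ^ (-s) * f k) →
        ∀ s ∈ Set.Ioo (0 : ℝ) 1, ∀ h : ℝ, |h| < s / 2 →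
          ‖S (s + h) - S s - h • u1 s‖ ≤ C * h ^ 2 / s ^ 2 * ‖f‖ := by
  refine ⟨8 + |log lam1| ^ 2 * exp (2 * |log lam1|), by positivity, ?_⟩
  intro lam hlam f S u1 hS hu1 s ⟨hs, hs1⟩ h hh
  have hsh : 0 < s + h := by linarith [neg_abs_le h]
  refine lp.norm_le_mul_norm_of_forall_norm_apply_le (by positivity) fun k => ?_
  have hcoord : (S (s + h) - S s - h • u1 s) k =
      (lam k ^ (-(s + h)) - lam k ^ (-s) - h * (-log (lam k) * lam k ^ (-s))) * f k := by
    simp only [lp.coeFn_sub, lp.coeFn_smul, Pi.sub_apply, Pi.smul_apply, smul_eq_mul,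
      hS _ hsh, hS _ hs, hu1 _ hs]
    ring
  rw [hcoord, norm_mul, Real.norm_eq_abs]
  gcongr
  exact abs_rpow_neg_add_sub_rpow_neg_sub_mul_le hlam1 (hlam k) hs hs1.le hh.le
end

section
/- For every natural number m and every s ∈ (0,1), the element u^{(m)}(s) belongs to H and the map t ↦ u^{(m)}(t) from (0,1) to H has derivative u^{(m+1)}(s) at s. In particular, S is three times Fréchet differentiable on (0,1), with first derivative u^{(1)}, second derivative u^{(2)}, and third derivative u^{(3)}. -/
/-!
Coordinatewise `u⁽ᵐ⁾(t)ₖ = (-log λₖ)ᵐ λₖ^(-t) fₖ`. For `t` in `[a, 1]` with `a > 0` the factor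
`|log λ|ʲ λ^(-t)` is bounded uniformly in `λ ≥ λ₁`: for `λ ≥ 1` the exponential series gives
`(a log λ)ʲ ≤ j! λ^a`, and for `λ₁ ≤ λ < 1` we have `|log λ| ≤ |log λ₁|` and `λ^(-t) ≤ λ₁⁻¹`.
So `u⁽ᵐ⁾(s)` is dominated by a multiple of `f`, and the second-order Taylor remainder of every
coordinate is at most `C (t - s)² |fₖ|`; in `ℓ²` this gives
`‖u⁽ᵐ⁾(t) - u⁽ᵐ⁾(s) - (t - s) u⁽ᵐ⁺¹⁾(s)‖ ≤ C ‖f‖ (t - s)² = o(t - s)`.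
-/

open Real Topology

open scoped Nat ENNReal

theorem Convex.norm_image_sub_sub_smul_le_of_norm_hasDerivWithin_deriv_le
    {𝕜 G : Type*} [RCLike 𝕜] [NormedAddCommGroup G] [NormedSpace 𝕜 G]
    {f f' f'' : 𝕜 → G} {D : Set 𝕜} {x y : 𝕜} {C : ℝ}
    (hf : ∀ z ∈ D, HasDerivWithinAt f (f' z) D z) (hf' : ∀ z ∈ D, HasDerivWithinAt f' (f'' z) D z)
    (bound : ∀ z ∈ D, ‖f'' z‖ ≤ C) (hD : Convex ℝ D) (xs : x ∈ D) (ys : y ∈ D) :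
    ‖f y - f x - (y - x) • f' x‖ ≤ C * ‖y - x‖ ^ 2 := by
  have hC : 0 ≤ C := (norm_nonneg _).trans (bound x xs)
  have hS : segment ℝ x y ⊆ D := hD.segment_subset xs ys
  have hderiv : ∀ z ∈ segment ℝ x y, HasDerivWithinAt (fun w => f w - (w - x) • f' x)
      (f' z - f' x) (segment ℝ x y) z := fun z hz => by
    simpa using ((hf z (hS hz)).mono hS).fun_sub
      (((hasDerivWithinAt_id z _).sub_const x).smul_const (f' x))
  have hbound : ∀ z ∈ segment ℝ x y, ‖f' z - f' x‖ ≤ C * ‖y - x‖ := fun z hz =>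
    (norm_image_sub_le_of_norm_hasDerivWithin_le hf' bound hD xs (hS hz)).trans
      (mul_le_mul_of_nonneg_left (norm_sub_le_of_mem_segment hz) hC)
  simpa [sq, mul_assoc, sub_right_comm] using norm_image_sub_le_of_norm_hasDerivWithin_le hderiv
    hbound (convex_segment x y) (left_mem_segment ℝ x y) (right_mem_segment ℝ x y)

theorem hasDerivAt_of_norm_sub_sub_smul_le_sq {𝕜 E : Type*} [NontriviallyNormedField 𝕜]
    [NormedAddCommGroup E] [NormedSpace 𝕜 E] {F : 𝕜 → E} {F' : E} {s : 𝕜} {C : ℝ}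
    (h : ∀ᶠ t in 𝓝 s, ‖F t - F s - (t - s) • F'‖ ≤ C * ‖t - s‖ ^ 2) : HasDerivAt F F' s := by
  rw [hasDerivAt_iff_isLittleO]
  refine (Asymptotics.IsBigO.of_bound C ?_).trans_isLittleO
    (Asymptotics.isLittleO_pow_sub_sub s one_lt_two)
  simpa only [norm_pow, norm_norm] using h

theorem lp.hasDerivAt_of_forall_abs_sub_sub_mul_le {ι : Type*} {p : ℝ≥0∞} [Fact (1 ≤ p)]
    {F : ℝ → lp (fun _ : ι => ℝ) p} {F' g : lp (fun _ : ι => ℝ) p} {s C : ℝ} (hC : 0 ≤ C)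
    (h : ∀ᶠ t in 𝓝 s, ∀ i, |F t i - F s i - (t - s) * F' i| ≤ C * |t - s| ^ 2 * |g i|) :
    HasDerivAt F F' s := by
  have hp : p ≠ 0 := (zero_lt_one.trans_le Fact.out).ne'
  refine hasDerivAt_of_norm_sub_sub_smul_le_sq (C := C * ‖g‖) ?_
  filter_upwards [h] with t ht
  calc ‖F t - F s - (t - s) • F'‖ ≤ ‖(C * |t - s| ^ 2) • g‖ :=
        lp.norm_mono hp fun i => by
          change |F t i - F s i - (t - s) * F' i| ≤ |C * |t - s| ^ 2 * g i|
          rw [abs_mul, abs_of_nonneg (by positivity : 0 ≤ C * |t - s| ^ 2)]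
          exact ht i
    _ = C * ‖g‖ * ‖t - s‖ ^ 2 := by
        rw [norm_smul, Real.norm_of_nonneg (by positivity), Real.norm_eq_abs]
        ring

noncomputable def rpowNegDeriv (m : ℕ) (x t : ℝ) : ℝ := (-1) ^ m * log x ^ m * x ^ (-t)

theorem hasDerivAt_rpowNegDeriv {x : ℝ} (hx : 0 < x) (m : ℕ) (t : ℝ) :
    HasDerivAt (rpowNegDeriv m x) (rpowNegDeriv (m + 1) x t) t := by
  have h : HasDerivAt (fun t => x ^ (-t)) (x ^ (-t) * log x * -1) t :=
    (hasStrictDerivAt_const_rpow hx (-t)).hasDerivAt.comp t (hasDerivAt_neg t)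
  refine (h.const_mul ((-1) ^ m * log x ^ m)).congr_deriv ?_
  rw [rpowNegDeriv, pow_succ, pow_succ]
  ring

noncomputable def rpowNegDerivBound (m : ℕ) (x₀ a : ℝ) : ℝ :=
  max (m ! / a ^ m) (|log x₀| ^ m / x₀)

theorem rpowNegDerivBound_nonneg {a : ℝ} (x₀ : ℝ) (ha : 0 < a) (m : ℕ) :
    0 ≤ rpowNegDerivBound m x₀ a :=
  le_max_of_le_left (by positivity)

theorem abs_rpowNegDeriv_le {x₀ x a t : ℝ} (hx₀ : 0 < x₀) (hx : x₀ ≤ x) (ha : 0 < a)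
    (hat : a ≤ t) (ht : t ≤ 1) (m : ℕ) :
    |rpowNegDeriv m x t| ≤ rpowNegDerivBound m x₀ a := by
  have hx_pos := hx₀.trans_le hx
  rw [rpowNegDeriv, rpowNegDerivBound, abs_mul, abs_mul, abs_pow, abs_pow, abs_neg, abs_one,
    one_pow, one_mul, abs_of_pos (rpow_pos_of_pos hx_pos _), rpow_def_of_pos hx_pos]
  set y := log x
  rcases le_or_gt 0 y with hy | hy
  · refine le_max_of_le_left ?_
    have hexp : (a * y) ^ m ≤ m ! * exp (a * y) := by
      have := pow_div_factorial_le_exp _ (mul_nonneg ha.le hy) m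
      rw [div_le_iff₀ (by positivity)] at this
      linarith
    rw [abs_of_nonneg hy, le_div_iff₀ (by positivity)]
    calc y ^ m * exp (y * -t) * a ^ m = (a * y) ^ m * exp (y * -t) := by ring
      _ ≤ m ! * exp (a * y) * exp (-(a * y)) := by
        gcongr
        nlinarith
      _ = m ! := by rw [mul_assoc, ← exp_add, add_neg_cancel, exp_zero, mul_one]
  · refine le_max_of_le_right ?_
    have hlog : log x₀ ≤ y := log_le_log hx₀ hx
    have habs : |y| ≤ |log x₀| := by
      rw [abs_of_neg hy, abs_of_neg (hlog.trans_lt hy)]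
      linarith
    have hexp : exp (y * -t) ≤ x₀⁻¹ := by
      rw [← exp_log hx₀, ← exp_neg]
      gcongr
      nlinarith
    rw [div_eq_mul_inv]
    gcongr

theorem abs_rpowNegDeriv_mul_sub_sub_le {x₀ x a s t : ℝ} (hx₀ : 0 < x₀) (hx : x₀ ≤ x)
    (ha : 0 < a) (hs : s ∈ Set.Ioo a 1) (ht : t ∈ Set.Ioo a 1) (m : ℕ) (c : ℝ) :
    |rpowNegDeriv m x t * c - rpowNegDeriv m x s * c - (t - s) * (rpowNegDeriv (m + 1) x s * c)|
      ≤ rpowNegDerivBound (m + 2) x₀ a * |t - s| ^ 2 * |c| := by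
  have hx_pos := hx₀.trans_le hx
  have := (convex_Ioo a 1).norm_image_sub_sub_smul_le_of_norm_hasDerivWithin_deriv_le
    (C := rpowNegDerivBound (m + 2) x₀ a * |c|)
    (fun z _ => ((hasDerivAt_rpowNegDeriv hx_pos m z).mul_const c).hasDerivWithinAt)
    (fun z _ => ((hasDerivAt_rpowNegDeriv hx_pos (m + 1) z).mul_const c).hasDerivWithinAt)
    (fun z hz => ?_) hs ht
  · simpa only [Real.norm_eq_abs, smul_eq_mul, mul_right_comm _ _ |c|] using this
  · rw [norm_mul, Real.norm_eq_abs]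
    exact mul_le_mul_of_nonneg_right (abs_rpowNegDeriv_le hx₀ hx ha hz.1.le hz.2.le _)
      (norm_nonneg c)

/-- For every `m : ℕ` and every `s ∈ (0,1)`, the sequence
`k ↦ (−1)^m (log λ_k)^m λ_k^{−s} f_k` belongs to `ℓ²` and the map `t ↦ u⁽ᵐ⁾(t)` has derivative
`u⁽ᵐ⁺¹⁾(s)` at `s`.  In particular (taking `m = 0,1,2`) the control-to-state map `S = u⁽⁰⁾` is
three times differentiable on `(0,1)`, with derivatives `u⁽¹⁾`, `u⁽²⁾` and `u⁽³⁾`. -/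
theorem hasDerivAt_state_iterated (lam1 : ℝ) (hlam1 : 0 < lam1) (lam : ℕ → ℝ)
    (hlam : ∀ k, lam1 ≤ lam k) (f : lp (fun _ : ℕ => ℝ) 2)
    (U : ℕ → ℝ → lp (fun _ : ℕ => ℝ) 2)
    (hU : ∀ (m : ℕ), ∀ s ∈ Set.Ioo (0 : ℝ) 1, ∀ k,
      U m s k = (-1 : ℝ) ^ m * (Real.log (lam k)) ^ m * lam k ^ (-s) * f k) :
    ∀ (m : ℕ), ∀ s ∈ Set.Ioo (0 : ℝ) 1,
      Memℓp (fun k => (-1 : ℝ) ^ m * (Real.log (lam k)) ^ m * lam k ^ (-s) * f k) 2 ∧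
      HasDerivAt (U m) (U (m + 1) s) s := by
  intro m s hs
  have ha : 0 < s / 2 := half_pos hs.1
  have hsD : s ∈ Set.Ioo (s / 2) 1 := ⟨half_lt_self hs.1, hs.2⟩
  have hUD : ∀ j, ∀ t ∈ Set.Ioo (s / 2) 1, ∀ k, U j t k = rpowNegDeriv j (lam k) t * f k :=
    fun j t ht => hU j t ⟨ha.trans ht.1, ht.2⟩
  refine ⟨((lp.memℓp f).norm.const_mul (rpowNegDerivBound m lam1 (s / 2))).mono fun k => ?_, ?_⟩
  · rw [norm_mul, Real.norm_eq_abs]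
    exact mul_le_mul_of_nonneg_right
      (abs_rpowNegDeriv_le hlam1 (hlam k) ha hsD.1.le hs.2.le m) (norm_nonneg _)
  refine lp.hasDerivAt_of_forall_abs_sub_sub_mul_le (g := f)
    (rpowNegDerivBound_nonneg lam1 ha (m + 2)) ?_
  filter_upwards [Ioo_mem_nhds hsD.1 hsD.2] with t ht k
  rw [hUD m t ht, hUD m s hsD, hUD (m + 1) s hsD]
  exact abs_rpowNegDeriv_mul_sub_sub_le hlam1 (hlam k) ha hsD ht m (f k)
end

section
/- There exists s̄ ∈ (a,b) such that F(s̄) ≤ F(s) for every s ∈ (a,b); that is, the reduced cost functional attains a global minimum at an interior point of (a,b). -/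
open Real Filter Set Topology

/-! Coordinatewise, `|∂ₛ λ^(-s)| = λ^(-s) |log λ|` is bounded uniformly in `λ ≥ λ₁` as long as `s`
stays in some `[c, 1]` with `c > 0`; hence `S` is locally Lipschitz on `(0, 1)` and `F` is
continuous on `(a, b)`. Since `F ≥ φ` blows up at both ends of `(a, b)`, a minimum of `F` over a
large enough compact subinterval is a global minimum. -/

theorem ContinuousOn.exists_isMinOn_Ioo_of_tendsto_atTop {f : ℝ → ℝ} {a b : ℝ} (hab : a < b)
    (hf : ContinuousOn f (Ioo a b)) (ha : Tendsto f (𝓝[>] a) atTop)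
    (hb : Tendsto f (𝓝[<] b) atTop) : ∃ x ∈ Ioo a b, IsMinOn f (Ioo a b) x := by
  set z := (a + b) / 2
  have hz : z ∈ Ioo a b := ⟨left_lt_add_div_two.2 hab, add_div_two_lt_right.2 hab⟩
  obtain ⟨u, hau, hu⟩ := mem_nhdsGT_iff_exists_Ioc_subset.1 (ha.eventually_gt_atTop (f z))
  obtain ⟨v, hvb, hv⟩ := mem_nhdsLT_iff_exists_Ico_subset.1 (hb.eventually_gt_atTop (f z))
  have huz : u < z := not_le.1 fun h => lt_irrefl (f z) (hu ⟨hz.1, h⟩)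
  have hzv : z < v := not_le.1 fun h => lt_irrefl (f z) (hv ⟨h, hz.2⟩)
  have hsub : Icc u v ⊆ Ioo a b := Icc_subset_Ioo hau hvb
  obtain ⟨x, hx, hmin⟩ := isCompact_Icc.exists_isMinOn ⟨z, huz.le, hzv.le⟩ (hf.mono hsub)
  have hxz : f x ≤ f z := hmin ⟨huz.le, hzv.le⟩
  refine ⟨x, hsub hx, fun y hy => ?_⟩
  rcases lt_or_ge y u with hyu | huy
  · exact hxz.trans (hu ⟨hy.1, hyu.le⟩).le
  rcases le_or_gt y v with hyv | hvy
  · exact hmin ⟨huy, hyv⟩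
  · exact hxz.trans (hv ⟨hvy.le, hy.2⟩).le

lemma rpow_neg_mul_abs_log_le {l x c u : ℝ} (hl : 0 < l) (hx : l ≤ x) (hc : 0 < c)
    (hcu : c ≤ u) (hu : u ≤ 1) : x ^ (-u) * |log x| ≤ 1 / c + |log l| / l := by
  have hx0 : 0 < x := hl.trans_le hx
  rcases le_or_gt 1 x with h1 | h1
  · have : x ^ (-u) * |log x| ≤ 1 / c := calc
        x ^ (-u) * |log x| ≤ x ^ (-c) * (x ^ c / c) := by
          rw [abs_of_nonneg (log_nonneg h1)]
          exact mul_le_mul (rpow_le_rpow_of_exponent_le h1 (neg_le_neg hcu))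
            (log_le_rpow_div hx0.le hc) (log_nonneg h1) (by positivity)
        _ = 1 / c := by rw [rpow_neg hx0.le]; field_simp
    linarith [(by positivity : 0 ≤ |log l| / l)]
  · have hpow : x ^ (-u) ≤ l⁻¹ := calc
        x ^ (-u) ≤ x ^ (-1 : ℝ) := rpow_le_rpow_of_exponent_ge hx0 h1.le (by linarith)
        _ ≤ l⁻¹ := by rw [rpow_neg_one]; exact inv_anti₀ hl hx
    have hlog : |log x| ≤ |log l| := by
      rw [abs_of_nonpos (log_nonpos hx0.le h1.le),
        abs_of_nonpos (log_nonpos hl.le (hx.trans h1.le))]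
      exact neg_le_neg (log_le_log hl hx)
    have : x ^ (-u) * |log x| ≤ |log l| / l := calc
        x ^ (-u) * |log x| ≤ l⁻¹ * |log l| :=
          mul_le_mul hpow hlog (abs_nonneg _) (inv_nonneg.2 hl.le)
        _ = |log l| / l := inv_mul_eq_div _ _
    linarith [(by positivity : 0 ≤ 1 / c)]

lemma abs_rpow_neg_sub_rpow_neg_le {l x c s t : ℝ} (hl : 0 < l) (hx : l ≤ x) (hc : 0 < c)
    (hs : s ∈ Icc c 1) (ht : t ∈ Icc c 1) :
    |x ^ (-s) - x ^ (-t)| ≤ (1 / c + |log l| / l) * |s - t| := by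
  have hx0 : 0 < x := hl.trans_le hx
  have hderiv : ∀ u ∈ Icc c 1, HasDerivWithinAt (fun u => x ^ (-u))
      (log x * -1 * x ^ (-u)) (Icc c 1) u := fun u _ =>
    ((hasDerivAt_neg u).const_rpow hx0).hasDerivWithinAt
  have hbound : ∀ u ∈ Icc c 1, ‖log x * -1 * x ^ (-u)‖ ≤ 1 / c + |log l| / l := fun u hu => by
    rw [mul_neg_one, neg_mul, norm_neg, norm_mul, mul_comm, norm_of_nonneg (rpow_nonneg hx0.le _),
      norm_eq_abs]
    exact rpow_neg_mul_abs_log_le hl hx hc hu.1 hu.2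
  simpa only [norm_eq_abs] using
    (convex_Icc c 1).norm_image_sub_le_of_norm_hasDerivWithin_le hderiv hbound ht hs

theorem continuousOn_of_apply_eq_rpow_neg_mul {α : Type*} {p : ENNReal} [Fact (1 ≤ p)]
    {l : ℝ} (hl : 0 < l) {lam : α → ℝ} (hlam : ∀ k, l ≤ lam k) {f : lp (fun _ : α => ℝ) p}
    {S : ℝ → lp (fun _ : α => ℝ) p} (hS : ∀ s ∈ Ioo (0 : ℝ) 1, ∀ k, S s k = lam k ^ (-s) * f k) :
    ContinuousOn S (Ioo 0 1) := by
  intro s₀ hs₀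
  set c := s₀ / 2
  have hc : 0 < c := half_pos hs₀.1
  set K := 1 / c + |log l| / l
  have hK : 0 ≤ K := by positivity
  have hlip : LipschitzOnWith (K * ‖f‖).toNNReal S (Ioo c 1) := by
    refine LipschitzOnWith.of_dist_le_mul fun s hs t ht => ?_
    rw [dist_eq_norm, dist_eq_norm, coe_toNNReal _ (by positivity), norm_eq_abs]
    calc ‖S s - S t‖ ≤ ‖(K * |s - t|) • f‖ := by
          refine lp.norm_mono (zero_lt_one.trans_le Fact.out).ne' fun k => ?_
          simp only [lp.coeFn_sub, Pi.sub_apply, lp.coeFn_smul, Pi.smul_apply, smul_eq_mul,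
            hS s ⟨hc.trans hs.1, hs.2⟩ k, hS t ⟨hc.trans ht.1, ht.2⟩ k, ← sub_mul, norm_mul,
            norm_eq_abs, abs_of_nonneg hK, abs_abs]
          exact mul_le_mul_of_nonneg_right (abs_rpow_neg_sub_rpow_neg_le hl (hlam k) hc
            (Ioo_subset_Icc_self hs) (Ioo_subset_Icc_self ht)) (abs_nonneg _)
      _ = K * ‖f‖ * |s - t| := by
          rw [norm_smul, norm_eq_abs, abs_of_nonneg (by positivity)]; ring
  exact (hlip.continuousOn.continuousAt
    (Ioo_mem_nhds (half_lt_self hs₀.1) hs₀.2)).continuousWithinAt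

theorem exists_minimizer_reduced_cost_general (lam1 : ℝ) (hlam1 : 0 < lam1) (lam : ℕ → ℝ)
    (hlam : ∀ k, lam1 ≤ lam k) (f : lp (fun _ : ℕ => ℝ) 2)
    (S : ℝ → lp (fun _ : ℕ => ℝ) 2)
    (hS : ∀ s ∈ Set.Ioo (0 : ℝ) 1, ∀ k, S s k = lam k ^ (-s) * f k)
    (ud : lp (fun _ : ℕ => ℝ) 2) (a b : ℝ) (ha : 0 ≤ a) (hab : a < b) (hb : b ≤ 1)
    (φ : ℝ → ℝ)
    (hφC2 : ContDiffOn ℝ 2 φ (Set.Ioo a b))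
    (hφa : Tendsto φ (nhdsWithin a (Set.Ioi a)) atTop)
    (hφb : Tendsto φ (nhdsWithin b (Set.Iio b)) atTop)
    (F : ℝ → ℝ) (hF : ∀ s ∈ Set.Ioo a b, F s = 1 / 2 * ‖S s - ud‖ ^ 2 + φ s) :
    ∃ sbar ∈ Set.Ioo a b, ∀ s ∈ Set.Ioo a b, F sbar ≤ F s := by
  have hScont : ContinuousOn S (Ioo a b) :=
    (continuousOn_of_apply_eq_rpow_neg_mul hlam1 hlam hS).mono (Ioo_subset_Ioo ha hb)
  have hFcont : ContinuousOn F (Ioo a b) :=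
    ((continuousOn_const.mul ((hScont.sub continuousOn_const).norm.pow 2)).add
      hφC2.continuousOn).congr hF
  have hφF : ∀ s ∈ Ioo a b, φ s ≤ F s := fun s hs => by
    rw [hF s hs]; exact le_add_of_nonneg_left (by positivity)
  have hFa : Tendsto F (𝓝[>] a) atTop :=
    tendsto_atTop_mono' _ (eventually_of_mem (Ioo_mem_nhdsGT hab) hφF) hφa
  have hFb : Tendsto F (𝓝[<] b) atTop :=
    tendsto_atTop_mono' _ (eventually_of_mem (Ioo_mem_nhdsLT hab) hφF) hφb
  obtain ⟨sbar, hsbar, hmin⟩ := hFcont.exists_isMinOn_Ioo_of_tendsto_atTop hab hFa hFb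
  exact ⟨sbar, hsbar, fun s hs => hmin hs⟩

/-- The reduced cost functional `F(s) = ½‖S(s) − u_d‖² + φ(s)` attains a global minimum at an
interior point of `(a,b)`. -/
theorem exists_minimizer_reduced_cost (lam1 : ℝ) (hlam1 : 0 < lam1) (lam : ℕ → ℝ)
    (hlam : ∀ k, lam1 ≤ lam k) (f : lp (fun _ : ℕ => ℝ) 2)
    (S : ℝ → lp (fun _ : ℕ => ℝ) 2)
    (hS : ∀ s ∈ Set.Ioo (0 : ℝ) 1, ∀ k, S s k = lam k ^ (-s) * f k)
    (ud : lp (fun _ : ℕ => ℝ) 2) (a b : ℝ) (ha : 0 ≤ a) (hab : a < b) (hb : b ≤ 1)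
    (φ : ℝ → ℝ) (hφ0 : ∀ s ∈ Set.Ioo a b, 0 ≤ φ s)
    (hφconv : ConvexOn ℝ (Set.Ioo a b) φ)
    (hφC2 : ContDiffOn ℝ 2 φ (Set.Ioo a b))
    (hφa : Tendsto φ (nhdsWithin a (Set.Ioi a)) atTop)
    (hφb : Tendsto φ (nhdsWithin b (Set.Iio b)) atTop)
    (F : ℝ → ℝ) (hF : ∀ s ∈ Set.Ioo a b, F s = 1 / 2 * ‖S s - ud‖ ^ 2 + φ s) :
    ∃ sbar ∈ Set.Ioo a b, ∀ s ∈ Set.Ioo a b, F sbar ≤ F s :=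
  exists_minimizer_reduced_cost_general lam1 hlam1 lam hlam f S hS ud a b ha hab hb φ hφC2 hφa hφb F
    hF
end

section
/- Assume 0 < a < b < 1. There exists a constant C > 0, depending only on λ₁, such that for every s ∈ (a,b) and every σ > 0 with s + σ ∈ (a,b) and s − σ ∈ (a,b), the centered difference satisfies ‖u^{(1)}(s) − (S(s+σ) − S(s−σ))/(2σ)‖ ≤ C · σ² · a^{-3} · ‖f‖. -/
/-!
In each coordinate the error is a scalar: with `c = -log λ_k` and `g(t) = exp (c t)`,
`g'(s) - (g(s+σ) - g(s-σ))/(2σ) = g(s) (cσ - sinh (cσ))/σ`, and the power series of `sinh` gives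
`|sinh x - x| ≤ |x|³/6 · cosh x`. The error is therefore at most
`σ²/12 · |c|³ (g(s-σ) + g(s+σ))`, and `|c|³ g(t)` is bounded uniformly in `k` for `t ∈ [a, 1]`:
for `λ_k ≥ 1` by `y³ ≤ 6 eʸ` applied to `y = t log λ_k`, which produces the factor `a⁻³`, and for
`λ₁ ≤ λ_k < 1` because then `|log λ_k| ≤ |log λ₁|`.
-/

open Real
open scoped Nat

theorem Real.sinh_sub_self_le_of_nonneg {x : ℝ} (hx : 0 ≤ x) :
    sinh x - x ≤ x ^ 3 / 6 * cosh x := by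
  have hsinh : HasSum (fun n ↦ x ^ (2 * (n + 1) + 1) / (2 * (n + 1) + 1)!) (sinh x - x) := by
    have := (hasSum_nat_add_iff' 1).mpr (hasSum_sinh x)
    rwa [Finset.sum_range_one, mul_zero, zero_add, pow_one, Nat.factorial_one, Nat.cast_one,
      div_one] at this
  refine hasSum_le (fun n ↦ ?_) hsinh ((hasSum_cosh x).mul_left (x ^ 3 / 6))
  have hfac : (2 * n)! * 3! ≤ (2 * n + 3)! :=
    Nat.le_of_dvd (Nat.factorial_pos _) (Nat.factorial_mul_factorial_dvd_factorial_add _ 3)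
  have hfac' : (6 : ℝ) * (2 * n)! ≤ (2 * n + 3)! := by
    rw [mul_comm]; exact_mod_cast hfac
  rw [show 2 * (n + 1) + 1 = 2 * n + 3 by ring, pow_add, mul_comm (x ^ (2 * n)), div_mul_div_comm]
  gcongr

theorem Real.abs_sinh_sub_self_le (x : ℝ) : |sinh x - x| ≤ |x| ^ 3 / 6 * cosh x := by
  have habs : |sinh x - x| = sinh |x| - |x| := by
    rcases le_total 0 x with hx | hx
    · rw [abs_of_nonneg hx, abs_of_nonneg (sub_nonneg.mpr (self_le_sinh_iff.mpr hx))]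
    · rw [abs_of_nonpos hx, abs_of_nonpos (sub_nonpos.mpr (sinh_le_self_iff.mpr hx)), sinh_neg]
      ring
  rw [habs, ← cosh_abs]
  exact sinh_sub_self_le_of_nonneg (abs_nonneg x)

theorem Real.abs_centered_difference_exp_le (c s : ℝ) {σ : ℝ} (hσ : σ ≠ 0) :
    |c * exp (c * s) - (2 * σ)⁻¹ * (exp (c * (s + σ)) - exp (c * (s - σ)))|
      ≤ σ ^ 2 * |c| ^ 3 / 12 * (exp (c * (s - σ)) + exp (c * (s + σ))) := by
  have hplus : exp (c * (s + σ)) = exp (c * s) * exp (c * σ) := by rw [← exp_add]; ring_nf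
  have hminus : exp (c * (s - σ)) = exp (c * s) * exp (-(c * σ)) := by rw [← exp_add]; ring_nf
  have hdiff : exp (c * (s + σ)) - exp (c * (s - σ)) = 2 * exp (c * s) * sinh (c * σ) := by
    rw [hplus, hminus, sinh_eq]; ring
  have hsum : exp (c * (s - σ)) + exp (c * (s + σ)) = 2 * exp (c * s) * cosh (c * σ) := by
    rw [hplus, hminus, cosh_eq]; ring
  have hsinh := abs_sinh_sub_self_le (c * σ)
  rw [hdiff, hsum]
  calc |c * exp (c * s) - (2 * σ)⁻¹ * (2 * exp (c * s) * sinh (c * σ))|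
      = exp (c * s) * |sinh (c * σ) - c * σ| / |σ| := by
        rw [show c * exp (c * s) - (2 * σ)⁻¹ * (2 * exp (c * s) * sinh (c * σ))
            = exp (c * s) * (c * σ - sinh (c * σ)) / σ by field_simp,
          abs_div, abs_mul, abs_of_pos (exp_pos _), abs_sub_comm]
    _ ≤ exp (c * s) * (|c * σ| ^ 3 / 6 * cosh (c * σ)) / |σ| := by gcongr
    _ = σ ^ 2 * |c| ^ 3 / 12 * (2 * exp (c * s) * cosh (c * σ)) := by
        rw [abs_mul, mul_pow, ← sq_abs σ]
        field_simp
        ring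

theorem Real.pow_three_mul_exp_neg_mul_le {t : ℝ} (ht : 0 < t) (L : ℝ) :
    L ^ 3 * exp (-L * t) ≤ 6 / t ^ 3 := by
  rcases lt_or_ge L 0 with hL | hL
  · have : L ^ 3 * exp (-L * t) < 0 :=
      mul_neg_of_neg_of_pos (Odd.pow_neg (by decide) hL) (exp_pos _)
    exact this.le.trans (by positivity)
  · have h := pow_div_factorial_le_exp _ (mul_nonneg hL ht.le) 3
    rw [le_div_iff₀ (by positivity)]
    calc L ^ 3 * exp (-L * t) * t ^ 3 = (L * t) ^ 3 * exp (-(L * t)) := by ring_nf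
      _ ≤ 6 * exp (L * t) * exp (-(L * t)) := by
          gcongr
          simpa [Nat.factorial, div_le_iff₀, mul_comm] using h
      _ = 6 := by rw [mul_assoc, ← exp_add, add_neg_cancel, exp_zero, mul_one]

theorem Real.abs_log_pow_three_mul_exp_le {lam1 x a t : ℝ} (hlam1 : 0 < lam1) (hx : lam1 ≤ x)
    (ha : 0 < a) (hat : a ≤ t) (ht1 : t ≤ 1) :
    |log x| ^ 3 * exp (-log x * t) ≤ (6 + |log lam1| ^ 3 * exp |log lam1|) / a ^ 3 := by
  set B := |log lam1|
  have hB : 0 ≤ B ^ 3 * exp B := by positivity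
  rcases le_total 0 (log x) with hL | hL
  · calc |log x| ^ 3 * exp (-log x * t) ≤ 6 / t ^ 3 := by
          rw [abs_of_nonneg hL]; exact pow_three_mul_exp_neg_mul_le (ha.trans_le hat) _
      _ ≤ 6 / a ^ 3 := by gcongr
      _ ≤ (6 + B ^ 3 * exp B) / a ^ 3 := by gcongr; linarith
  · have hLB : |log x| ≤ B := by
      rw [abs_of_nonpos hL]
      linarith [neg_abs_le (log lam1), log_le_log hlam1 hx]
    have hexp : -log x * t ≤ B := by nlinarith [abs_of_nonpos hL]
    calc |log x| ^ 3 * exp (-log x * t) ≤ B ^ 3 * exp B := by gcongr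
      _ ≤ 6 + B ^ 3 * exp B := by linarith
      _ ≤ (6 + B ^ 3 * exp B) / a ^ 3 :=
          le_div_self (by positivity) (by positivity) (pow_le_one₀ ha.le (hat.trans ht1))

theorem Real.abs_centered_difference_rpow_neg_le {lam1 x a s σ : ℝ} (hlam1 : 0 < lam1)
    (hx : lam1 ≤ x) (ha : 0 < a) (hσ : σ ≠ 0) (hsp : s + σ ∈ Set.Icc a 1)
    (hsm : s - σ ∈ Set.Icc a 1) :
    |-log x * x ^ (-s) - (2 * σ)⁻¹ * (x ^ (-(s + σ)) - x ^ (-(s - σ)))|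
      ≤ (6 + |log lam1| ^ 3 * exp |log lam1|) / 6 * σ ^ 2 / a ^ 3 := by
  set K := 6 + |log lam1| ^ 3 * exp |log lam1|
  have hpow : ∀ t, x ^ (-t) = exp (-log x * t) := fun t ↦ by
    rw [rpow_def_of_pos (hlam1.trans_le hx), mul_neg, ← neg_mul]
  have hbound : ∀ t ∈ Set.Icc a 1, |-log x| ^ 3 * exp (-log x * t) ≤ K / a ^ 3 := fun t ht ↦ by
    simpa only [abs_neg] using abs_log_pow_three_mul_exp_le hlam1 hx ha ht.1 ht.2
  rw [hpow, hpow, hpow]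
  calc _ ≤ σ ^ 2 * |-log x| ^ 3 / 12 * (exp (-log x * (s - σ)) + exp (-log x * (s + σ))) :=
        abs_centered_difference_exp_le _ s hσ
    _ = σ ^ 2 / 12 * (|-log x| ^ 3 * exp (-log x * (s - σ))
          + |-log x| ^ 3 * exp (-log x * (s + σ))) := by ring
    _ ≤ σ ^ 2 / 12 * (K / a ^ 3 + K / a ^ 3) := by
        gcongr
        exacts [hbound _ hsm, hbound _ hsp]
    _ = K / 6 * σ ^ 2 / a ^ 3 := by ring

/-- Centered-difference approximation of `u¹(s)`: there exists `C > 0`, depending only on `λ₁`,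
such that for all admissible `s` and `σ`,
`‖u¹(s) − (S(s+σ) − S(s−σ))/(2σ)‖ ≤ C σ² a⁻³ ‖f‖`. -/
theorem centered_difference_estimate (lam1 : ℝ) (hlam1 : 0 < lam1) :
    ∃ C : ℝ, 0 < C ∧
      ∀ (lam : ℕ → ℝ), (∀ k, lam1 ≤ lam k) →
      ∀ (f : lp (fun _ : ℕ => ℝ) 2) (S u1 : ℝ → lp (fun _ : ℕ => ℝ) 2),
        (∀ s ∈ Set.Ioo (0 : ℝ) 1, ∀ k, S s k = lam k ^ (-s) * f k) →
        (∀ s ∈ Set.Ioo (0 : ℝ) 1, ∀ k,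
          u1 s k = -(Real.log (lam k)) * lam k ^ (-s) * f k) →
      ∀ (a b : ℝ), 0 < a → a < b → b < 1 →
      ∀ s ∈ Set.Ioo a b, ∀ σ : ℝ, 0 < σ →
        s + σ ∈ Set.Ioo a b → s - σ ∈ Set.Ioo a b →
        ‖u1 s - (2 * σ)⁻¹ • (S (s + σ) - S (s - σ))‖ ≤ C * σ ^ 2 / a ^ 3 * ‖f‖ := by
  let C : ℝ := (6 + |log lam1| ^ 3 * exp |log lam1|) / 6
  refine ⟨C, by positivity, ?_⟩
  intro lam hlam f S u1 hS hu1 a b ha _ hb1 s hs σ hσ hsp hsm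
  have hIoo : ∀ t ∈ Set.Ioo a b, t ∈ Set.Ioo (0 : ℝ) 1 := fun t ht ↦
    ⟨ha.trans ht.1, ht.2.trans hb1⟩
  have hIcc : ∀ t ∈ Set.Ioo a b, t ∈ Set.Icc a 1 := fun t ht ↦ ⟨ht.1.le, (ht.2.trans hb1).le⟩
  have hcoord : ∀ k, ‖(u1 s - (2 * σ)⁻¹ • (S (s + σ) - S (s - σ))) k‖
      ≤ ‖((C * σ ^ 2 / a ^ 3) • f) k‖ := by
    intro k
    have hval : (u1 s - (2 * σ)⁻¹ • (S (s + σ) - S (s - σ))) k = (-log (lam k) * lam k ^ (-s)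
        - (2 * σ)⁻¹ * (lam k ^ (-(s + σ)) - lam k ^ (-(s - σ)))) * f k := by
      change u1 s k - (2 * σ)⁻¹ * (S (s + σ) k - S (s - σ) k) = _
      rw [hu1 s (hIoo s hs), hS _ (hIoo _ hsp), hS _ (hIoo _ hsm)]
      ring
    rw [hval, norm_mul, lp.coeFn_smul, Pi.smul_apply, norm_smul,
      Real.norm_of_nonneg (by positivity : 0 ≤ C * σ ^ 2 / a ^ 3), Real.norm_eq_abs]
    gcongr
    exact abs_centered_difference_rpow_neg_le hlam1 (hlam k) ha hσ.ne' (hIcc _ hsp) (hIcc _ hsm)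
  calc ‖u1 s - (2 * σ)⁻¹ • (S (s + σ) - S (s - σ))‖ ≤ ‖(C * σ ^ 2 / a ^ 3) • f‖ :=
        lp.norm_mono two_ne_zero hcoord
    _ = C * σ ^ 2 / a ^ 3 * ‖f‖ := by rw [norm_smul, Real.norm_of_nonneg (by positivity)]
end

section
/- Assume 0 < a < b < 1. Then for every sufficiently small σ > 0 there exist points s_l, s_r ∈ (a,b) with s_l < s_r, s_l ± σ ∈ (a,b) and s_r ± σ ∈ (a,b), such that j_σ(s_l) < 0 and j_σ(s_r) > 0. (Hence by the intermediate value theorem j_σ has a root s_σ ∈ (s_l, s_r).) -/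
/-!
For `0 < a ≤ s - σ < s + σ < 1` the inner-product part of `j_σ(s)` is bounded by a constant `M`
independent of `s` and `σ`: `‖S s‖ ≤ max 1 λ₁⁻¹ ‖f‖`, and the mean value theorem in the exponent
makes `s ↦ λ_k ^ (-s)` Lipschitz on `[a, 1]` uniformly in `k`, so the centered difference
quotient is bounded too. Since `φ` is convex and blows up at both ends of `(a, b)`, its
derivative takes values below `-M` near `a` and above `M` near `b`; at such points `s_l < s_r`
the sign of `j_σ` is that of `φ'` for every `σ` small enough that `s_l ± σ, s_r ± σ ∈ (a, b)`.
-/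

open Real Filter Set
open scoped RealInnerProductSpace Topology

theorem ConvexOn.exists_lt_deriv_of_tendsto_nhdsLT_atTop {φ φ' : ℝ → ℝ} {a b t : ℝ}
    (hconv : ConvexOn ℝ (Ioo a b) φ) (hd : ∀ s ∈ Ioo a b, HasDerivAt φ (φ' s) s)
    (hφb : Tendsto φ (𝓝[<] b) atTop) (ht : t ∈ Ioo a b) (M : ℝ) :
    ∃ s ∈ Ioo t b, M < φ' s := by
  obtain ⟨s, hφs, hts, hsb⟩ :=
    ((hφb.eventually_gt_atTop (φ t + max M 0 * (b - t))).and (Ioo_mem_nhdsLT ht.2)).exists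
  have hs : s ∈ Ioo a b := ⟨ht.1.trans hts, hsb⟩
  refine ⟨s, ⟨hts, hsb⟩, ?_⟩
  calc M ≤ max M 0 := le_max_left _ _
    _ < slope φ t s := by
      rw [slope_def_field, lt_div_iff₀ (sub_pos.2 hts)]
      nlinarith [mul_le_mul_of_nonneg_left hsb.le (le_max_right M 0)]
    _ ≤ φ' s := hconv.slope_le_of_hasDerivAt ht hs hts (hd s hs)

theorem ConvexOn.exists_deriv_lt_of_tendsto_nhdsGT_atTop {φ φ' : ℝ → ℝ} {a b t : ℝ}
    (hconv : ConvexOn ℝ (Ioo a b) φ) (hd : ∀ s ∈ Ioo a b, HasDerivAt φ (φ' s) s)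
    (hφa : Tendsto φ (𝓝[>] a) atTop) (ht : t ∈ Ioo a b) (M : ℝ) :
    ∃ s ∈ Ioo a t, φ' s < M := by
  obtain ⟨s, hφs, has, hst⟩ :=
    ((hφa.eventually_gt_atTop (φ t + max (-M) 0 * (t - a))).and (Ioo_mem_nhdsGT ht.1)).exists
  have hs : s ∈ Ioo a b := ⟨has, hst.trans ht.2⟩
  refine ⟨s, ⟨has, hst⟩, ?_⟩
  calc φ' s ≤ slope φ s t := hconv.le_slope_of_hasDerivAt hs ht hst (hd s hs)
    _ < -max (-M) 0 := by
      rw [slope_def_field, div_lt_iff₀ (sub_pos.2 hst)]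
      nlinarith [mul_le_mul_of_nonneg_left has.le (le_max_right (-M) 0)]
    _ ≤ M := by linarith [le_max_left (-M) 0]

theorem Real.rpow_neg_le_max_one_inv {m x s : ℝ} (hm : 0 < m) (hx : m ≤ x) (hs₀ : 0 ≤ s)
    (hs₁ : s ≤ 1) : x ^ (-s) ≤ max 1 m⁻¹ := by
  have hx₀ : 0 < x := hm.trans_le hx
  rcases le_or_gt 1 x with h1 | h1
  · exact (rpow_le_one_of_one_le_of_nonpos h1 (by linarith)).trans (le_max_left _ _)
  · calc x ^ (-s) ≤ x ^ (-1 : ℝ) := rpow_le_rpow_of_exponent_ge hx₀ h1.le (by linarith)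
      _ = x⁻¹ := rpow_neg_one x
      _ ≤ m⁻¹ := inv_anti₀ hm hx
      _ ≤ max 1 m⁻¹ := le_max_right _ _

theorem Real.abs_log_mul_rpow_neg_le {m x a s : ℝ} (hm : 0 < m) (hx : m ≤ x) (ha : 0 < a)
    (has : a ≤ s) (hs₁ : s ≤ 1) : |log x| * x ^ (-s) ≤ a⁻¹ + |log m| * m⁻¹ := by
  have hx₀ : 0 < x := hm.trans_le hx
  rcases le_or_gt 1 x with h1 | h1
  · -- `log x ≤ x ^ a / a` absorbs the decay `x ^ (-s) ≤ x ^ (-a)`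
    have hlog : |log x| ≤ x ^ a / a := by
      rw [abs_of_nonneg (log_nonneg h1)]; exact log_le_rpow_div hx₀.le ha
    calc |log x| * x ^ (-s) ≤ x ^ a / a * x ^ (-a) := by
          gcongr
      _ = a⁻¹ := by rw [div_mul_eq_mul_div, ← rpow_add hx₀]; simp [div_eq_inv_mul]
      _ ≤ a⁻¹ + |log m| * m⁻¹ := le_add_of_nonneg_right (by positivity)
  · have hlog : |log x| ≤ |log m| := by
      rw [abs_of_neg (log_neg hx₀ h1), abs_of_neg (log_neg hm (hx.trans_lt h1))]
      exact neg_le_neg (log_le_log hm hx)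
    calc |log x| * x ^ (-s) ≤ |log m| * m⁻¹ := by
          gcongr
          calc x ^ (-s) ≤ x ^ (-1 : ℝ) := rpow_le_rpow_of_exponent_ge hx₀ h1.le (by linarith)
            _ = x⁻¹ := rpow_neg_one x
            _ ≤ m⁻¹ := inv_anti₀ hm hx
      _ ≤ a⁻¹ + |log m| * m⁻¹ := le_add_of_nonneg_left (by positivity)

theorem Real.abs_rpow_neg_sub_rpow_neg_le {m x a u v : ℝ} (hm : 0 < m) (hx : m ≤ x) (ha : 0 < a)
    (hu : u ∈ Icc a 1) (hv : v ∈ Icc a 1) :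
    |x ^ (-v) - x ^ (-u)| ≤ (a⁻¹ + |log m| * m⁻¹) * |v - u| := by
  have hx₀ : 0 < x := hm.trans_le hx
  have hderiv : ∀ s ∈ Icc a 1,
      HasDerivWithinAt (fun s ↦ x ^ (-s)) (log x * (-1) * x ^ (-s)) (Icc a 1) s := fun s _ ↦
    (hasDerivAt_neg s).hasDerivWithinAt.const_rpow hx₀
  have hbound : ∀ s ∈ Icc a 1, ‖log x * (-1) * x ^ (-s)‖ ≤ a⁻¹ + |log m| * m⁻¹ := fun s hs ↦ by
    rw [mul_neg_one, norm_mul, norm_neg, norm_of_nonneg (rpow_nonneg hx₀.le _), norm_eq_abs]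
    exact abs_log_mul_rpow_neg_le hm hx ha hs.1 hs.2
  simpa only [norm_eq_abs] using
    (convex_Icc a 1).norm_image_sub_le_of_norm_hasDerivWithin_le hderiv hbound hu hv

section ControlToState

variable {m : ℝ} {lam : ℕ → ℝ} {f : lp (fun _ : ℕ => ℝ) 2} {S : ℝ → lp (fun _ : ℕ => ℝ) 2}

theorem norm_state_le (hm : 0 < m) (hlam : ∀ k, m ≤ lam k)
    (hS : ∀ s ∈ Ioo (0 : ℝ) 1, ∀ k, S s k = lam k ^ (-s) * f k) {s : ℝ} (hs : s ∈ Ioo (0 : ℝ) 1) :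
    ‖S s‖ ≤ max 1 m⁻¹ * ‖f‖ := by
  have hC : 0 ≤ max 1 m⁻¹ := zero_le_one.trans (le_max_left _ _)
  calc ‖S s‖ ≤ ‖max 1 m⁻¹ • f‖ := lp.norm_mono two_ne_zero fun k ↦ by
        rw [hS s hs k, lp.coeFn_smul, Pi.smul_apply, smul_eq_mul, norm_mul, norm_mul,
          norm_of_nonneg (rpow_nonneg ((hm.trans_le (hlam k)).le) _), norm_of_nonneg hC]
        gcongr
        exact rpow_neg_le_max_one_inv hm (hlam k) hs.1.le hs.2.le
    _ = max 1 m⁻¹ * ‖f‖ := by rw [lp.norm_const_smul two_ne_zero, norm_of_nonneg hC]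

theorem norm_state_sub_state_le (hm : 0 < m) (hlam : ∀ k, m ≤ lam k)
    (hS : ∀ s ∈ Ioo (0 : ℝ) 1, ∀ k, S s k = lam k ^ (-s) * f k) {a u v : ℝ} (ha : 0 < a)
    (hu : u ∈ Ico a 1) (hv : v ∈ Ico a 1) :
    ‖S v - S u‖ ≤ (a⁻¹ + |log m| * m⁻¹) * |v - u| * ‖f‖ := by
  have hL : 0 ≤ (a⁻¹ + |log m| * m⁻¹) * |v - u| := by positivity
  calc ‖S v - S u‖ ≤ ‖((a⁻¹ + |log m| * m⁻¹) * |v - u|) • f‖ :=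
        lp.norm_mono two_ne_zero fun k ↦ by
          rw [lp.coeFn_sub, Pi.sub_apply, hS v ⟨ha.trans_le hv.1, hv.2⟩ k,
            hS u ⟨ha.trans_le hu.1, hu.2⟩ k, ← sub_mul, lp.coeFn_smul, Pi.smul_apply,
            smul_eq_mul, norm_mul, norm_mul, norm_of_nonneg hL, norm_eq_abs]
          gcongr
          exact abs_rpow_neg_sub_rpow_neg_le hm (hlam k) ha (Ico_subset_Icc_self hu)
            (Ico_subset_Icc_self hv)
    _ = (a⁻¹ + |log m| * m⁻¹) * |v - u| * ‖f‖ := by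
        rw [lp.norm_const_smul two_ne_zero, norm_of_nonneg hL]

theorem abs_inner_centeredDiff_le (hm : 0 < m) (hlam : ∀ k, m ≤ lam k)
    (hS : ∀ s ∈ Ioo (0 : ℝ) 1, ∀ k, S s k = lam k ^ (-s) * f k) (ud : lp (fun _ : ℕ => ℝ) 2)
    {a s σ : ℝ} (ha : 0 < a) (hσ : 0 < σ) (h₁ : a ≤ s - σ) (h₂ : s + σ < 1) :
    |⟪S s - ud, (2 * σ)⁻¹ • (S (s + σ) - S (s - σ))⟫| ≤
      (max 1 m⁻¹ * ‖f‖ + ‖ud‖) * ((a⁻¹ + |log m| * m⁻¹) * ‖f‖) := by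
  have hdiff : ‖(2 * σ)⁻¹ • (S (s + σ) - S (s - σ))‖ ≤ (a⁻¹ + |log m| * m⁻¹) * ‖f‖ := by
    have h := norm_state_sub_state_le hm hlam hS ha (u := s - σ) (v := s + σ)
      ⟨h₁, by linarith⟩ ⟨by linarith, h₂⟩
    rw [show s + σ - (s - σ) = 2 * σ by ring, abs_of_pos (show (0 : ℝ) < 2 * σ by positivity)] at h
    rw [norm_smul, norm_inv, norm_of_nonneg (by positivity), inv_mul_le_iff₀ (by positivity)]
    linarith
  calc |⟪S s - ud, (2 * σ)⁻¹ • (S (s + σ) - S (s - σ))⟫|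
      ≤ ‖S s - ud‖ * ‖(2 * σ)⁻¹ • (S (s + σ) - S (s - σ))‖ := abs_real_inner_le_norm _ _
    _ ≤ (max 1 m⁻¹ * ‖f‖ + ‖ud‖) * ((a⁻¹ + |log m| * m⁻¹) * ‖f‖) := by
        gcongr
        exact (norm_sub_le _ _).trans
          (by gcongr; exact norm_state_le hm hlam hS ⟨by linarith, by linarith⟩)

end ControlToState

theorem root_isolation_general (lam1 : ℝ) (hlam1 : 0 < lam1) (lam : ℕ → ℝ)
    (hlam : ∀ k, lam1 ≤ lam k) (f : lp (fun _ : ℕ => ℝ) 2)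
    (S : ℝ → lp (fun _ : ℕ => ℝ) 2)
    (hS : ∀ s ∈ Set.Ioo (0 : ℝ) 1, ∀ k, S s k = lam k ^ (-s) * f k)
    (ud : lp (fun _ : ℕ => ℝ) 2)
    (a b : ℝ) (ha : 0 < a) (hab : a < b) (hb : b < 1)
    (φ φ' : ℝ → ℝ)
    (hφconv : ConvexOn ℝ (Set.Ioo a b) φ)
    (hφd : ∀ s ∈ Set.Ioo a b, HasDerivAt φ (φ' s) s)
    (hφa : Tendsto φ (nhdsWithin a (Set.Ioi a)) atTop)
    (hφb : Tendsto φ (nhdsWithin b (Set.Iio b)) atTop) :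
    ∃ σ₀ > 0, ∀ σ : ℝ, 0 < σ → σ < σ₀ →
      ∃ sl ∈ Set.Ioo a b, ∃ sr ∈ Set.Ioo a b, sl < sr ∧
        sl + σ ∈ Set.Ioo a b ∧ sl - σ ∈ Set.Ioo a b ∧
        sr + σ ∈ Set.Ioo a b ∧ sr - σ ∈ Set.Ioo a b ∧
        ⟪S sl - ud, (2 * σ)⁻¹ • (S (sl + σ) - S (sl - σ))⟫ + φ' sl < 0 ∧
        0 < ⟪S sr - ud, (2 * σ)⁻¹ • (S (sr + σ) - S (sr - σ))⟫ + φ' sr := by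
  set M := (max 1 lam1⁻¹ * ‖f‖ + ‖ud‖) * ((a⁻¹ + |log lam1| * lam1⁻¹) * ‖f‖)
  obtain ⟨t, ht⟩ := exists_between hab
  obtain ⟨sl, ⟨hasl, hslt⟩, hsl⟩ :=
    hφconv.exists_deriv_lt_of_tendsto_nhdsGT_atTop hφd hφa ht (-M)
  obtain ⟨sr, ⟨htsr, hsrb⟩, hsr⟩ := hφconv.exists_lt_deriv_of_tendsto_nhdsLT_atTop hφd hφb ht M
  refine ⟨min (sl - a) (b - sr), lt_min (sub_pos.2 hasl) (sub_pos.2 hsrb), fun σ hσ hσ₀ ↦ ?_⟩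
  have hσl : σ < sl - a := hσ₀.trans_le (min_le_left _ _)
  have hσr : σ < b - sr := hσ₀.trans_le (min_le_right _ _)
  have hjl := abs_le.1 <| abs_inner_centeredDiff_le hlam1 hlam hS ud ha hσ (s := sl)
    (by linarith) (by linarith)
  have hjr := abs_le.1 <| abs_inner_centeredDiff_le hlam1 hlam hS ud ha hσ (s := sr)
    (by linarith) (by linarith)
  refine ⟨sl, ⟨hasl, by linarith⟩, sr, ⟨by linarith, hsrb⟩, by linarith, ⟨by linarith, by linarith⟩,
    ⟨by linarith, by linarith⟩, ⟨by linarith, by linarith⟩, ⟨by linarith, by linarith⟩,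
    by linarith [hjl.2], by linarith [hjr.1]⟩

/-- Root isolation for the bisection algorithm: for every sufficiently small `σ > 0` there are
points `s_l < s_r` in `(a,b)`, admissible for the centered difference, with `j_σ(s_l) < 0` and
`j_σ(s_r) > 0`, where `j_σ(s) = ⟨S(s) − u_d, (S(s+σ) − S(s−σ))/(2σ)⟩ + φ'(s)`. -/
theorem root_isolation (lam1 : ℝ) (hlam1 : 0 < lam1) (lam : ℕ → ℝ)
    (hlam : ∀ k, lam1 ≤ lam k) (f : lp (fun _ : ℕ => ℝ) 2)
    (S : ℝ → lp (fun _ : ℕ => ℝ) 2)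
    (hS : ∀ s ∈ Set.Ioo (0 : ℝ) 1, ∀ k, S s k = lam k ^ (-s) * f k)
    (ud : lp (fun _ : ℕ => ℝ) 2)
    (a b : ℝ) (ha : 0 < a) (hab : a < b) (hb : b < 1)
    (φ φ' : ℝ → ℝ) (hφ0 : ∀ s ∈ Set.Ioo a b, 0 ≤ φ s)
    (hφconv : ConvexOn ℝ (Set.Ioo a b) φ)
    (hφd : ∀ s ∈ Set.Ioo a b, HasDerivAt φ (φ' s) s)
    (hφdc : ContinuousOn φ' (Set.Ioo a b))
    (hφa : Tendsto φ (nhdsWithin a (Set.Ioi a)) atTop)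
    (hφb : Tendsto φ (nhdsWithin b (Set.Iio b)) atTop) :
    ∃ σ₀ > 0, ∀ σ : ℝ, 0 < σ → σ < σ₀ →
      ∃ sl ∈ Set.Ioo a b, ∃ sr ∈ Set.Ioo a b, sl < sr ∧
        sl + σ ∈ Set.Ioo a b ∧ sl - σ ∈ Set.Ioo a b ∧
        sr + σ ∈ Set.Ioo a b ∧ sr - σ ∈ Set.Ioo a b ∧
        ⟪S sl - ud, (2 * σ)⁻¹ • (S (sl + σ) - S (sl - σ))⟫ + φ' sl < 0 ∧
        0 < ⟪S sr - ud, (2 * σ)⁻¹ • (S (sr + σ) - S (sr - σ))⟫ + φ' sr :=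
  root_isolation_general lam1 hlam1 lam hlam f S hS ud a b ha hab hb φ φ' hφconv hφd hφa hφb
end

section
/- Assume 0 < a < b < 1. Let s̄ ∈ (a,b) satisfy F'(s̄) = 0 and suppose there exist ϑ > 0 and δ > 0 such that (F'(s) − F'(s̄))·(s − s̄) ≥ (ϑ/2)|s − s̄|² for all s ∈ (a,b) ∩ (s̄ − δ, s̄ + δ). Then there exists a constant C > 0, depending only on λ₁, ϑ, ‖f‖ and ‖u_d‖, such that: for every σ > 0 and every s_σ ∈ (a,b) ∩ (s̄ − δ, s̄ + δ) with s_σ ± σ ∈ (a,b) and j_σ(s_σ) = 0, one has |s̄ − s_σ| ≤ C · σ² · a^{-3}. -/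
/-! Let `e = u⁽¹⁾(s_σ) − d_σ u(s_σ)` be the consistency error of the centered difference.
Since `j_σ(s_σ) = 0` we have `F'(s_σ) = ⟪S(s_σ) − u_d, e⟫`, so the monotonicity condition at
`s_σ` and Cauchy–Schwarz give `(ϑ/2)|s_σ − s̄| ≤ ‖S(s_σ) − u_d‖ ‖e‖`. With `ℓ = log λ_k`, the
`k`-th coordinate of `e` is exactly `λ_k^{-s}(sinh(ℓσ) − ℓσ)/σ · f_k`, and
`|sinh x − x| ≤ |x|³ cosh x / 2` bounds it by `σ² |ℓ|³ (λ_k^{-(s−σ)} + λ_k^{-(s+σ)}) / 4 · |f_k|`.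
Finally `|ℓ|³ λ_k^{-t} ≤ (6 + |log λ₁|³/λ₁)/t³` for `t ∈ (0,1]`, from `y³ ≤ 6 eʸ` when
`λ_k ≥ 1`. -/

open Real Filter
open scoped RealInnerProductSpace ENNReal

namespace Real

lemma sinh_le_mul_cosh {t : ℝ} (ht : 0 ≤ t) : sinh t ≤ t * cosh t := by
  have hderiv (x : ℝ) : HasDerivAt (fun x ↦ x * cosh x - sinh x) (x * sinh x) x :=
    (((hasDerivAt_id' x).mul (hasDerivAt_cosh x)).sub (hasDerivAt_sinh x)).congr_deriv (by ring)
  have hmono : Monotone (fun x ↦ x * cosh x - sinh x) :=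
    monotone_of_deriv_nonneg (fun x ↦ (hderiv x).differentiableAt) fun x ↦ by
      rw [(hderiv x).deriv]
      rcases le_total 0 x with hx | hx
      · exact mul_nonneg hx (sinh_nonneg_iff.2 hx)
      · exact mul_nonneg_of_nonpos_of_nonpos hx (sinh_nonpos_iff.2 hx)
  simpa using hmono ht

lemma cosh_sub_one_le_mul_sinh {t : ℝ} (ht : 0 ≤ t) : cosh t - 1 ≤ t / 2 * sinh t := by
  obtain ⟨x, rfl⟩ : ∃ x, t = 2 * x := ⟨t / 2, by ring⟩
  have hx : 0 ≤ x := by linarith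
  have := sinh_le_mul_cosh hx
  rw [cosh_two_mul, sinh_two_mul, cosh_sq]
  nlinarith [sinh_nonneg_iff.2 hx]

lemma sinh_sub_self_le {t : ℝ} (ht : 0 ≤ t) : sinh t - t ≤ t ^ 3 / 2 * cosh t := by
  have h₁ := sinh_le_mul_cosh ht
  have h₂ := cosh_sub_one_le_mul_sinh ht
  calc sinh t - t ≤ t * (cosh t - 1) := by linarith
    _ ≤ t * (t / 2 * sinh t) := by gcongr
    _ ≤ t * (t / 2 * (t * cosh t)) := by gcongr
    _ = t ^ 3 / 2 * cosh t := by ring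

lemma abs_sinh_sub_self_le_s18 (t : ℝ) : |sinh t - t| ≤ |t| ^ 3 / 2 * cosh t := by
  rcases le_total 0 t with ht | ht
  · rw [abs_of_nonneg (sub_nonneg.2 (self_le_sinh_iff.2 ht)), abs_of_nonneg ht]
    exact sinh_sub_self_le ht
  · have := sinh_sub_self_le (neg_nonneg.2 ht)
    rw [sinh_neg, cosh_neg] at this
    rw [abs_of_nonpos (sub_nonpos.2 (sinh_le_self_iff.2 ht)), abs_of_nonpos ht]
    linarith

lemma log_pow_three_mul_rpow_neg_le {L t : ℝ} (hL : 1 ≤ L) (ht : 0 < t) :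
    log L ^ 3 * L ^ (-t) ≤ 6 / t ^ 3 := by
  have hy : 0 ≤ t * log L := mul_nonneg ht.le (log_nonneg hL)
  have hexp : (t * log L) ^ 3 / 6 ≤ L ^ t := by
    rw [rpow_def_of_pos (by linarith), mul_comm (log L)]
    simpa [Nat.factorial] using pow_div_factorial_le_exp _ hy 3
  rw [rpow_neg (by linarith), ← div_eq_mul_inv, div_le_div_iff₀ (by positivity) (by positivity)]
  nlinarith

lemma rpow_neg_le_inv {lam1 L t : ℝ} (hlam1 : 0 < lam1) (hL : lam1 ≤ L) (hL1 : L ≤ 1)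
    (ht1 : t ≤ 1) : L ^ (-t) ≤ lam1⁻¹ :=
  calc L ^ (-t) ≤ L ^ (-1 : ℝ) := rpow_le_rpow_of_exponent_ge (by linarith) hL1 (by linarith)
    _ = L⁻¹ := rpow_neg_one L
    _ ≤ lam1⁻¹ := inv_anti₀ hlam1 hL

lemma rpow_neg_le_max_one_inv_s18 {lam1 L t : ℝ} (hlam1 : 0 < lam1) (hL : lam1 ≤ L) (ht0 : 0 ≤ t)
    (ht1 : t ≤ 1) : L ^ (-t) ≤ max 1 lam1⁻¹ := by
  rcases le_total 1 L with hL1 | hL1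
  · exact (rpow_le_one_of_one_le_of_nonpos hL1 (by linarith)).trans (le_max_left _ _)
  · exact (rpow_neg_le_inv hlam1 hL hL1 ht1).trans (le_max_right _ _)

lemma abs_log_pow_three_mul_rpow_neg_le {lam1 L t : ℝ} (hlam1 : 0 < lam1) (hL : lam1 ≤ L)
    (ht0 : 0 < t) (ht1 : t ≤ 1) :
    |log L| ^ 3 * L ^ (-t) ≤ (6 + |log lam1| ^ 3 / lam1) / t ^ 3 := by
  have hK : 0 ≤ |log lam1| ^ 3 / lam1 := by positivity
  rcases le_total 1 L with hL1 | hL1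
  · rw [abs_of_nonneg (log_nonneg hL1), add_div]
    have := log_pow_three_mul_rpow_neg_le hL1 ht0
    have : 0 ≤ |log lam1| ^ 3 / lam1 / t ^ 3 := by positivity
    linarith
  · have hlog : |log L| ≤ |log lam1| := by
      rw [abs_of_nonpos (log_nonpos (by linarith) hL1),
        abs_of_nonpos (log_nonpos hlam1.le (hL.trans hL1))]
      linarith [log_le_log hlam1 hL]
    have ht3 : t ^ 3 ≤ 1 := pow_le_one₀ ht0.le ht1
    calc |log L| ^ 3 * L ^ (-t) ≤ |log lam1| ^ 3 * lam1⁻¹ :=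
          mul_le_mul (pow_le_pow_left₀ (abs_nonneg _) hlog 3) (rpow_neg_le_inv hlam1 hL hL1 ht1)
            (rpow_nonneg (by linarith) _) (by positivity)
      _ ≤ 6 + |log lam1| ^ 3 / lam1 := by rw [← div_eq_mul_inv]; linarith
      _ ≤ (6 + |log lam1| ^ 3 / lam1) / t ^ 3 := le_div_self (by positivity) (by positivity) ht3

lemma rpow_neg_add_eq_mul_exp {L : ℝ} (hL : 0 < L) (s σ : ℝ) :
    L ^ (-(s + σ)) = L ^ (-s) * exp (-(log L * σ)) := by
  rw [rpow_def_of_pos hL, rpow_def_of_pos hL, ← exp_add]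
  ring_nf

lemma neg_log_mul_rpow_neg_sub_centered_diff {L σ : ℝ} (hL : 0 < L) (hσ : σ ≠ 0) (s : ℝ) :
    -log L * L ^ (-s) - (2 * σ)⁻¹ * (L ^ (-(s + σ)) - L ^ (-(s - σ))) =
      L ^ (-s) * (sinh (log L * σ) - log L * σ) / σ := by
  rw [sub_eq_add_neg s σ, rpow_neg_add_eq_mul_exp hL, rpow_neg_add_eq_mul_exp hL, sinh_eq]
  field_simp
  ring_nf

lemma abs_neg_log_mul_rpow_neg_sub_centered_diff_le {lam1 L a s σ : ℝ} (hlam1 : 0 < lam1)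
    (hL : lam1 ≤ L) (hσ : 0 < σ) (ha : 0 < a) (has : a ≤ s - σ) (hs1 : s + σ ≤ 1) :
    |-log L * L ^ (-s) - (2 * σ)⁻¹ * (L ^ (-(s + σ)) - L ^ (-(s - σ)))| ≤
      (6 + |log lam1| ^ 3 / lam1) * σ ^ 2 / a ^ 3 := by
  have hL0 : 0 < L := hlam1.trans_le hL
  set K := 6 + |log lam1| ^ 3 / lam1
  have hbound {t : ℝ} (hat : a ≤ t) (ht1 : t ≤ 1) : |log L| ^ 3 * L ^ (-t) ≤ K / a ^ 3 :=
    (abs_log_pow_three_mul_rpow_neg_le hlam1 hL (ha.trans_le hat) ht1).trans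
      (by gcongr)
  have hcosh : L ^ (-s) * cosh (log L * σ) = (L ^ (-(s - σ)) + L ^ (-(s + σ))) / 2 := by
    rw [cosh_eq, sub_eq_add_neg s σ, rpow_neg_add_eq_mul_exp hL0, rpow_neg_add_eq_mul_exp hL0]
    ring_nf
  rw [neg_log_mul_rpow_neg_sub_centered_diff hL0 hσ.ne', abs_div, abs_mul,
    abs_of_pos (rpow_pos_of_pos hL0 _), abs_of_pos hσ]
  calc L ^ (-s) * |sinh (log L * σ) - log L * σ| / σ
      ≤ L ^ (-s) * (|log L * σ| ^ 3 / 2 * cosh (log L * σ)) / σ := by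
        gcongr; exact abs_sinh_sub_self_le_s18 _
    _ = σ ^ 2 * |log L| ^ 3 * (L ^ (-s) * cosh (log L * σ)) / 2 := by
        rw [abs_mul, abs_of_pos hσ]
        field_simp
    _ = σ ^ 2 * ((|log L| ^ 3 * L ^ (-(s - σ)) + |log L| ^ 3 * L ^ (-(s + σ))) / 4) := by
        rw [hcosh]; ring
    _ ≤ σ ^ 2 * ((K / a ^ 3 + K / a ^ 3) / 4) := by
        gcongr
        · exact hbound has (by linarith)
        · exact hbound (by linarith) hs1
    _ = K * σ ^ 2 / a ^ 3 / 2 := by ring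
    _ ≤ K * σ ^ 2 / a ^ 3 := half_le_self (by positivity)

end Real

lemma lp.norm_le_mul_of_forall_norm_apply_le {ι : Type*} {E : ι → Type*}
    [∀ i, NormedAddCommGroup (E i)] [∀ i, NormedSpace ℝ (E i)] {p : ℝ≥0∞} [Fact (1 ≤ p)]
    {x y : lp E p} {c : ℝ} (hc : 0 ≤ c) (h : ∀ i, ‖x i‖ ≤ c * ‖y i‖) : ‖x‖ ≤ c * ‖y‖ := by
  have hp : p ≠ 0 := (zero_lt_one.trans_le Fact.out).ne'
  calc ‖x‖ ≤ ‖c • y‖ := lp.norm_mono hp fun i ↦ by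
        simpa [norm_smul, Real.norm_of_nonneg hc] using h i
    _ = c * ‖y‖ := by rw [lp.norm_const_smul hp, Real.norm_of_nonneg hc]

section SpectralModel

variable {lam1 : ℝ} {lam : ℕ → ℝ} {p : ℝ≥0∞} [Fact (1 ≤ p)] {f : lp (fun _ : ℕ ↦ ℝ) p}

lemma norm_le_max_one_inv_mul_of_apply_eq_rpow_neg_mul (hlam1 : 0 < lam1)
    (hlam : ∀ k, lam1 ≤ lam k) {g : lp (fun _ : ℕ ↦ ℝ) p} {s : ℝ} (hs0 : 0 ≤ s) (hs1 : s ≤ 1)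
    (hg : ∀ k, g k = lam k ^ (-s) * f k) : ‖g‖ ≤ max 1 lam1⁻¹ * ‖f‖ := by
  refine lp.norm_le_mul_of_forall_norm_apply_le (by positivity) fun k ↦ ?_
  rw [hg, norm_mul, Real.norm_of_nonneg (Real.rpow_nonneg (hlam1.le.trans (hlam k)) _)]
  gcongr
  exact Real.rpow_neg_le_max_one_inv_s18 hlam1 (hlam k) hs0 hs1

lemma norm_sub_centered_diff_le (hlam1 : 0 < lam1) (hlam : ∀ k, lam1 ≤ lam k)
    {u Sp Sm : lp (fun _ : ℕ ↦ ℝ) p} {a s σ : ℝ} (hσ : 0 < σ) (ha : 0 < a) (has : a ≤ s - σ)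
    (hs1 : s + σ ≤ 1) (hu : ∀ k, u k = -log (lam k) * lam k ^ (-s) * f k)
    (hSp : ∀ k, Sp k = lam k ^ (-(s + σ)) * f k) (hSm : ∀ k, Sm k = lam k ^ (-(s - σ)) * f k) :
    ‖u - (2 * σ)⁻¹ • (Sp - Sm)‖ ≤ (6 + |log lam1| ^ 3 / lam1) * σ ^ 2 / a ^ 3 * ‖f‖ := by
  refine lp.norm_le_mul_of_forall_norm_apply_le (by positivity) fun k ↦ ?_
  have hcoord : (u - (2 * σ)⁻¹ • (Sp - Sm)) k = (-log (lam k) * lam k ^ (-s) -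
      (2 * σ)⁻¹ * (lam k ^ (-(s + σ)) - lam k ^ (-(s - σ)))) * f k := by
    simp only [lp.coeFn_sub, lp.coeFn_smul, Pi.sub_apply, Pi.smul_apply, smul_eq_mul, hu, hSp, hSm]
    ring
  rw [hcoord, norm_mul, Real.norm_eq_abs]
  gcongr
  exact Real.abs_neg_log_mul_rpow_neg_sub_centered_diff_le hlam1 (hlam k) hσ ha has hs1

end SpectralModel

lemma abs_le_of_half_mul_sq_le_mul {ϑ x c : ℝ} (hϑ : 0 < ϑ) (h : ϑ / 2 * |x| ^ 2 ≤ c * x) :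
    |x| ≤ 2 / ϑ * |c| := by
  have hcx : c * x ≤ |c| * |x| := (le_abs_self _).trans (abs_mul c x).le
  rcases (abs_nonneg x).eq_or_lt with hx | hx
  · rw [← hx]; positivity
  · have : ϑ / 2 * |x| * |x| ≤ |c| * |x| := by linarith [sq |x|]
    have := le_of_mul_le_mul_right this hx
    rw [div_mul_eq_mul_div, le_div_iff₀ hϑ]
    linarith

theorem convergence_rate_in_sigma_general (lam1 : ℝ) (hlam1 : 0 < lam1) (lam : ℕ → ℝ)
    (hlam : ∀ k, lam1 ≤ lam k) (f : lp (fun _ : ℕ => ℝ) 2)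
    (S u1 : ℝ → lp (fun _ : ℕ => ℝ) 2)
    (hS : ∀ s ∈ Set.Ioo (0 : ℝ) 1, ∀ k, S s k = lam k ^ (-s) * f k)
    (hu1 : ∀ s ∈ Set.Ioo (0 : ℝ) 1, ∀ k,
      u1 s k = -(Real.log (lam k)) * lam k ^ (-s) * f k)
    (ud : lp (fun _ : ℕ => ℝ) 2)
    (a b : ℝ) (ha : 0 < a) (hb : b < 1)
    (φ' : ℝ → ℝ)
    (sbar : ℝ)
    (hcrit : ⟪S sbar - ud, u1 sbar⟫ + φ' sbar = 0)
    (ϑ δ : ℝ) (hϑ : 0 < ϑ)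
    (hmono : ∀ s ∈ Set.Ioo a b, |s - sbar| < δ →
      ϑ / 2 * |s - sbar| ^ 2 ≤
        ((⟪S s - ud, u1 s⟫ + φ' s) - (⟪S sbar - ud, u1 sbar⟫ + φ' sbar)) * (s - sbar)) :
    ∃ C : ℝ, 0 < C ∧
      ∀ σ : ℝ, 0 < σ → ∀ sσ ∈ Set.Ioo a b, |sσ - sbar| < δ →
        sσ + σ ∈ Set.Ioo a b → sσ - σ ∈ Set.Ioo a b →
        ⟪S sσ - ud, (2 * σ)⁻¹ • (S (sσ + σ) - S (sσ - σ))⟫ + φ' sσ = 0 →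
        |sbar - sσ| ≤ C * σ ^ 2 / a ^ 3 := by
  set K := 6 + |log lam1| ^ 3 / lam1
  set D := 2 / ϑ * (max 1 lam1⁻¹ * ‖f‖ + ‖ud‖) * (K * ‖f‖)
  refine ⟨D + 1, by positivity, fun σ hσ sσ hsσ hsσδ hps hms hroot ↦ ?_⟩
  have hIoo : Set.Ioo a b ⊆ Set.Ioo 0 1 := Set.Ioo_subset_Ioo ha.le hb.le
  set e := u1 sσ - (2 * σ)⁻¹ • (S (sσ + σ) - S (sσ - σ))
  have hF : ⟪S sσ - ud, u1 sσ⟫ + φ' sσ = ⟪S sσ - ud, e⟫ := by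
    rw [inner_sub_right]; linarith
  have hres : ‖S sσ - ud‖ ≤ max 1 lam1⁻¹ * ‖f‖ + ‖ud‖ :=
    (norm_sub_le _ _).trans <| add_le_add_left (norm_le_max_one_inv_mul_of_apply_eq_rpow_neg_mul
      hlam1 hlam (hIoo hsσ).1.le (hIoo hsσ).2.le (hS sσ (hIoo hsσ))) _
  have herr : ‖e‖ ≤ K * σ ^ 2 / a ^ 3 * ‖f‖ :=
    norm_sub_centered_diff_le hlam1 hlam hσ ha hms.1.le (hps.2.trans hb).le
      (hu1 sσ (hIoo hsσ)) (hS _ (hIoo hps)) (hS _ (hIoo hms))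
  have hdist := abs_le_of_half_mul_sq_le_mul hϑ (by simpa [hcrit, hF] using hmono sσ hsσ hsσδ)
  rw [abs_sub_comm]
  calc |sσ - sbar| ≤ 2 / ϑ * |⟪S sσ - ud, e⟫| := hdist
    _ ≤ 2 / ϑ * (‖S sσ - ud‖ * ‖e‖) := by gcongr; exact abs_real_inner_le_norm _ _
    _ ≤ 2 / ϑ * ((max 1 lam1⁻¹ * ‖f‖ + ‖ud‖) * (K * σ ^ 2 / a ^ 3 * ‖f‖)) := by gcongr
    _ = D * σ ^ 2 / a ^ 3 := by ring
    _ ≤ (D + 1) * σ ^ 2 / a ^ 3 := by gcongr; linarith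

/-- Convergence rate in `σ`: if `s̄ ∈ (a,b)` is a critical point of the reduced cost functional
satisfying the local strong monotonicity condition with constants `ϑ, δ > 0`, then any root
`s_σ` of `j_σ` lying in `(s̄−δ, s̄+δ) ∩ (a,b)` satisfies `|s̄ − s_σ| ≤ C σ² a⁻³`, where `C > 0`
depends only on `λ₁`, `ϑ`, `‖f‖` and `‖u_d‖`. -/
theorem convergence_rate_in_sigma (lam1 : ℝ) (hlam1 : 0 < lam1) (lam : ℕ → ℝ)
    (hlam : ∀ k, lam1 ≤ lam k) (f : lp (fun _ : ℕ => ℝ) 2)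
    (S u1 : ℝ → lp (fun _ : ℕ => ℝ) 2)
    (hS : ∀ s ∈ Set.Ioo (0 : ℝ) 1, ∀ k, S s k = lam k ^ (-s) * f k)
    (hu1 : ∀ s ∈ Set.Ioo (0 : ℝ) 1, ∀ k,
      u1 s k = -(Real.log (lam k)) * lam k ^ (-s) * f k)
    (ud : lp (fun _ : ℕ => ℝ) 2)
    (a b : ℝ) (ha : 0 < a) (hab : a < b) (hb : b < 1)
    (φ φ' : ℝ → ℝ) (hφ0 : ∀ s ∈ Set.Ioo a b, 0 ≤ φ s)
    (hφconv : ConvexOn ℝ (Set.Ioo a b) φ)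
    (hφd : ∀ s ∈ Set.Ioo a b, HasDerivAt φ (φ' s) s)
    (hφa : Tendsto φ (nhdsWithin a (Set.Ioi a)) atTop)
    (hφb : Tendsto φ (nhdsWithin b (Set.Iio b)) atTop)
    (sbar : ℝ) (hsbar : sbar ∈ Set.Ioo a b)
    (hcrit : ⟪S sbar - ud, u1 sbar⟫ + φ' sbar = 0)
    (ϑ δ : ℝ) (hϑ : 0 < ϑ) (hδ : 0 < δ)
    (hmono : ∀ s ∈ Set.Ioo a b, |s - sbar| < δ →
      ϑ / 2 * |s - sbar| ^ 2 ≤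
        ((⟪S s - ud, u1 s⟫ + φ' s) - (⟪S sbar - ud, u1 sbar⟫ + φ' sbar)) * (s - sbar)) :
    ∃ C : ℝ, 0 < C ∧
      ∀ σ : ℝ, 0 < σ → ∀ sσ ∈ Set.Ioo a b, |sσ - sbar| < δ →
        sσ + σ ∈ Set.Ioo a b → sσ - σ ∈ Set.Ioo a b →
        ⟪S sσ - ud, (2 * σ)⁻¹ • (S (sσ + σ) - S (sσ - σ))⟫ + φ' sσ = 0 →
        |sbar - sσ| ≤ C * σ ^ 2 / a ^ 3 :=
  convergence_rate_in_sigma_general lam1 hlam1 lam hlam f S u1 hS hu1 ud a b ha hb φ' sbar hcrit ϑ δ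
    hϑ hmono
end
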